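/- arXiv:2001.11836 — 4 statements merged into one kernel-verified Lean document; each statement's English description precedes it below -/
import Mathlib

section
/- Let Z be a commutative algebra over a commutative ring R equipped with a skew-symmetric 2-brace [−,−] and a cyclically symmetric 3-brace [−,−,−] (each a derivation in every variable). If the quasi-Jacobi identity [[x,y],z] + [[y,z],x] + [[z,x],y] = [x,y,z] − [z,y,x] holds for all x, y, z in a generating set S of the algebra Z, then it holds for all x, y, z ∈ Z. -/
theorem stmt4 (R : Type*) [CommRing R] (Z : Type*) [CommRing Z] [Algebra R Z]
    (S : Set Z) (hS : Algebra.adjoin R S = ⊤)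
    (br2 : Z →ₗ[R] Z →ₗ[R] Z) (br3 : Z →ₗ[R] Z →ₗ[R] Z →ₗ[R] Z)
    (hskew : ∀ x y : Z, br2 x y = - br2 y x)
    (hcyc : ∀ x y z : Z, br3 x y z = br3 z x y)
    (h2L : ∀ a b c : Z, br2 (a * b) c = a * br2 b c + br2 a c * b)
    (h2R : ∀ a b c : Z, br2 a (b * c) = b * br2 a c + br2 a b * c)
    (h3₁ : ∀ b c x y : Z, br3 (x * y) b c = x * br3 y b c + br3 x b c * y)
    (h3₂ : ∀ a c x y : Z, br3 a (x * y) c = x * br3 a y c + br3 a x c * y)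
    (h3₃ : ∀ a b x y : Z, br3 a b (x * y) = x * br3 a b y + br3 a b x * y)
    (hgen : ∀ x ∈ S, ∀ y ∈ S, ∀ z ∈ S,
      br2 (br2 x y) z + br2 (br2 y z) x + br2 (br2 z x) y = br3 x y z - br3 z y x) :
    ∀ x y z : Z,
      br2 (br2 x y) z + br2 (br2 y z) x + br2 (br2 z x) y = br3 x y z - br3 z y x := by
  set E : Z → Z → Z → Z := fun x y z =>
    br2 (br2 x y) z + br2 (br2 y z) x + br2 (br2 z x) y - (br3 x y z - br3 z y x) with hE
  -- basic vanishing on 1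
  have b2one : ∀ a : Z, br2 a (1 : Z) = 0 := by
    intro a
    have := h2R a 1 1
    simp at this
    exact this
  have b2one' : ∀ a : Z, br2 (1 : Z) a = 0 := by
    intro a; rw [hskew, b2one, neg_zero]
  have b3one₁ : ∀ a b : Z, br3 (1 : Z) a b = 0 := by
    intro a b
    have := h3₁ a b 1 1
    simp at this
    exact this
  have b3one₂ : ∀ a b : Z, br3 a (1 : Z) b = 0 := by
    intro a b
    have := h3₂ a b 1 1
    simp at this
    exact this
  have b3one₃ : ∀ a b : Z, br3 a b (1 : Z) = 0 := by
    intro a b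
    have := h3₃ a b 1 1
    simp at this
    exact this
  -- derivation property of E in each slot
  have hd1 : ∀ a b y z : Z, E (a * b) y z = a * E b y z + E a y z * b := by
    intro a b y z
    simp only [hE, h2L, h2R, h3₁, h3₃, map_add, LinearMap.add_apply]
    rw [hskew z a, hskew z b]
    simp only [map_neg, LinearMap.neg_apply]
    ring
  have hd2 : ∀ a b x z : Z, E x (a * b) z = a * E x b z + E x a z * b := by
    intro a b x z
    simp only [hE, h2L, h2R, h3₂, map_add, LinearMap.add_apply]
    rw [hskew x a, hskew x b]
    simp only [map_neg, LinearMap.neg_apply]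
    ring
  have hd3 : ∀ a b x y : Z, E x y (a * b) = a * E x y b + E x y a * b := by
    intro a b x y
    simp only [hE, h2L, h2R, h3₁, h3₃, map_add, LinearMap.add_apply]
    rw [hskew y a, hskew y b]
    simp only [map_neg, LinearMap.neg_apply]
    ring
  -- additivity in each slot
  have ha1 : ∀ a b y z : Z, E (a + b) y z = E a y z + E b y z := by
    intro a b y z; simp only [hE, map_add, LinearMap.add_apply]; ring
  have ha2 : ∀ a b x z : Z, E x (a + b) z = E x a z + E x b z := by
    intro a b x z; simp only [hE, map_add, LinearMap.add_apply]; ring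
  have ha3 : ∀ a b x y : Z, E x y (a + b) = E x y a + E x y b := by
    intro a b x y; simp only [hE, map_add, LinearMap.add_apply]; ring
  -- vanishing on algebraMap in each slot
  have hm1 : ∀ (r : R) (y z : Z), E (algebraMap R Z r) y z = 0 := by
    intro r y z
    rw [Algebra.algebraMap_eq_smul_one]
    simp [hE, b2one, b2one', b3one₁, b3one₂, b3one₃]
  have hm2 : ∀ (r : R) (x z : Z), E x (algebraMap R Z r) z = 0 := by
    intro r x z
    rw [Algebra.algebraMap_eq_smul_one]
    simp [hE, b2one, b2one', b3one₁, b3one₂, b3one₃]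
  have hm3 : ∀ (r : R) (x y : Z), E x y (algebraMap R Z r) = 0 := by
    intro r x y
    rw [Algebra.algebraMap_eq_smul_one]
    simp [hE, b2one, b2one', b3one₁, b3one₂, b3one₃]
  have key : ∀ x y z : Z, E x y z = 0 := by
    have memtop : ∀ w : Z, w ∈ Algebra.adjoin R S := by
      intro w; rw [hS]; exact trivial
    intro x y z
    induction memtop x using Algebra.adjoin_induction with
    | algebraMap r => exact hm1 r y z
    | add a b _ _ pa pb => rw [ha1, pa, pb, add_zero]
    | mul a b _ _ pa pb => rw [hd1, pa, pb]; ring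
    | mem x hx =>
      induction memtop y using Algebra.adjoin_induction with
      | algebraMap r => exact hm2 r x z
      | add a b _ _ pa pb => rw [ha2, pa, pb, add_zero]
      | mul a b _ _ pa pb => rw [hd2, pa, pb]; ring
      | mem y hy =>
        induction memtop z using Algebra.adjoin_induction with
        | algebraMap r => exact hm3 r x y
        | add a b _ _ pa pb => rw [ha3, pa, pb, add_zero]
        | mul a b _ _ pa pb => rw [hd3, pa, pb]; ring
        | mem z hz =>
          simp only [hE]
          rw [hgen x hx y hy z hz]; ring
  intro x y z
  have := key x y z
  simp only [hE] at this
  linear_combination this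
end

section
/- Let π be a group, R a commutative ring, A = R[π], and ∂ : A → A a left Fox derivative. Writing ∂(x) = Σ_{a∈π} (x/a)_∂ · a for x ∈ π (with (x/a)_∂ ∈ R, finitely many nonzero), define the R-linear map Δ_∂ : A → A by Δ_∂(x) = Σ_{a∈π} (x/a)_∂ · a⁻¹ x a for x ∈ π. Then Δ_∂(xy) = Δ_∂(yx) for all x, y ∈ π; consequently Δ_∂ vanishes on the submodule A' spanned by commutators, and induces a linear map Ǎ = A/A' → A. -/
/-!
The Fox rule gives `∂(xy) = ∂x + x ∂y`, and in the term `x ∂y` the element `xy` is conjugated by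
`xb`, which is the same as conjugating `yx` by `b`. Hence
`Δ(xy) = Σₐ (x/a) a⁻¹(xy)a + Σ_b (y/b) b⁻¹(yx)b`, an expression symmetric in `x` and `y`.
By bilinearity `Δ(uv) = Δ(vu)` on all of `A`, so `Δ` kills commutators and factors through `A/A'`.
-/

open MonoidAlgebra

lemma Submodule.span_commutators_le_ker {R A M : Type*} [Semiring R] [Ring A] [Module R A]
    [AddCommGroup M] [Module R M] (f : A →ₗ[R] M) (h : ∀ u v, f (u * v) = f (v * u)) :
    span R {z : A | ∃ u v : A, z = u * v - v * u} ≤ LinearMap.ker f :=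
  span_le.mpr fun _ ⟨u, v, hz⟩ => by simp [hz, h u v]

namespace MonoidAlgebra

variable {R G : Type*}

lemma map_mul_comm_of_forall_of {M : Type*} [CommSemiring R] [Monoid G] [AddCommMonoid M]
    [Module R M] (f : R[G] →ₗ[R] M)
    (h : ∀ x y : G, f (of R G x * of R G y) = f (of R G y * of R G x)) (u v : R[G]) :
    f (u * v) = f (v * u) := by
  induction u using MonoidAlgebra.induction_on with
  | of x =>
    induction v using MonoidAlgebra.induction_on with
    | of y => exact h x y
    | add v w hv hw => simp only [mul_add, add_mul, map_add, hv, hw]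
    | smul r v hv => simp only [mul_smul_comm, smul_mul_assoc, map_smul, hv]
  | add u w hu hw => simp only [mul_add, add_mul, map_add, hu, hw]
  | smul r u hu => simp only [mul_smul_comm, smul_mul_assoc, map_smul, hu]

variable [Semiring R] [Group G]

lemma coeff_of_mul (y : G) (f : R[G]) :
    (of R G y * f).coeff = Finsupp.mapDomain (y * ·) f.coeff := by
  ext z
  rw [of_apply, coeff_single_mul_apply, one_mul,
    ← Finsupp.mapDomain_apply (mul_right_injective y), mul_inv_cancel_left]

noncomputable def conjSum (f : R[G]) (x : G) : R[G] :=
  f.coeff.sum fun a r => r • of R G (a⁻¹ * x * a)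

lemma conjSum_add (f g : R[G]) (x : G) : conjSum (f + g) x = conjSum f x + conjSum g x :=
  Finsupp.sum_add_index' (fun _ => zero_smul R _) fun _ _ _ => add_smul _ _ _

lemma conjSum_of_mul (y : G) (f : R[G]) (x : G) :
    conjSum (of R G y * f) x = conjSum f (y⁻¹ * x * y) := by
  rw [conjSum, coeff_of_mul,
    Finsupp.sum_mapDomain_index (h := fun a r => r • of R G (a⁻¹ * x * a))
      (fun _ => zero_smul R _) fun _ _ _ => add_smul _ _ _]
  simp only [conjSum, mul_inv_rev, mul_assoc]

section Fox

variable (D : R[G] →ₗ[R] R[G])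
  (hFox : ∀ x y : G, D (of R G x * of R G y) = D (of R G x) + of R G x * D (of R G y))
  (Δ : R[G] →ₗ[R] R[G]) (hΔ : ∀ x : G, Δ (of R G x) = conjSum (D (of R G x)) x)
include hFox hΔ

lemma map_of_mul_of_eq_conjSum_add (x y : G) :
    Δ (of R G x * of R G y) = conjSum (D (of R G x)) (x * y) + conjSum (D (of R G y)) (y * x) := by
  rw [← map_mul, hΔ, map_mul, hFox, conjSum_add, conjSum_of_mul, inv_mul_cancel_left]

lemma map_of_mul_of_comm (x y : G) : Δ (of R G x * of R G y) = Δ (of R G y * of R G x) := by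
  rw [map_of_mul_of_eq_conjSum_add D hFox Δ hΔ, map_of_mul_of_eq_conjSum_add D hFox Δ hΔ, add_comm]

end Fox

end MonoidAlgebra

theorem stmt6 (R : Type*) [CommRing R] (G : Type*) [Group G]
    (D : MonoidAlgebra R G →ₗ[R] MonoidAlgebra R G)
    (hFox : ∀ x y : G,
      D (MonoidAlgebra.of R G x * MonoidAlgebra.of R G y)
        = D (MonoidAlgebra.of R G x) + MonoidAlgebra.of R G x * D (MonoidAlgebra.of R G y))
    (Δ : MonoidAlgebra R G →ₗ[R] MonoidAlgebra R G)
    (hΔ : ∀ x : G, Δ (MonoidAlgebra.of R G x)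
        = (D (MonoidAlgebra.of R G x)).coeff.sum
            (fun a r => r • MonoidAlgebra.of R G (a⁻¹ * x * a)))
    (A' : Submodule R (MonoidAlgebra R G))
    (hA' : A' = Submodule.span R
      {z : MonoidAlgebra R G | ∃ u v : MonoidAlgebra R G, z = u * v - v * u}) :
    (∀ x y : G,
      Δ (MonoidAlgebra.of R G x * MonoidAlgebra.of R G y)
        = Δ (MonoidAlgebra.of R G y * MonoidAlgebra.of R G x)) ∧
    (∀ a ∈ A', Δ a = 0) ∧
    ∃ Δbar : (MonoidAlgebra R G ⧸ A') →ₗ[R] MonoidAlgebra R G,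
      ∀ a : MonoidAlgebra R G, Δbar (Submodule.Quotient.mk a) = Δ a := by
  have hcomm := map_of_mul_of_comm D hFox Δ hΔ
  have hker : A' ≤ LinearMap.ker Δ :=
    hA' ▸ Submodule.span_commutators_le_ker Δ (map_mul_comm_of_forall_of Δ hcomm)
  exact ⟨hcomm, fun _ ha => hker ha, A'.liftQ Δ hker, fun _ => rfl⟩
end

section
/- Let π be a group, R a commutative ring, A = R[π], and ∂ : A → A a left Fox derivative with coefficients (x/a) defined by ∂(x) = Σ_{a∈π} (x/a)·a for x ∈ π. Then for any fixed F ∈ A, the R-linear map d : A → A defined on group elements by d(x) = Σ_{a∈π} (x/a) · a F a⁻¹ x is a derivation of the algebra A, i.e. d(uv) = d(u)v + u d(v) for all u, v ∈ A. -/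
/-!
Write `T_F` for the `R`-linear extension of `a ↦ a F a⁻¹`. Then `d x = T_F (∂ x) · x` on group
elements, and `T_F (x u) = x · T_F u · x⁻¹`. Applying `T_F` to the Fox rule
`∂(xy) = ∂x + x ∂y` and multiplying by `xy` on the right gives `d(xy) = d(x) y + x d(y)`;
a linear map satisfying the Leibniz rule on group elements satisfies it everywhere by bilinearity.
-/

open MonoidAlgebra

namespace MonoidAlgebra

theorem leibniz_of_leibniz_of {R M : Type*} [CommSemiring R] [Monoid M]
    (d : R[M] →ₗ[R] R[M])
    (h : ∀ x y : M, d (of R M (x * y)) = d (of R M x) * of R M y + of R M x * d (of R M y))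
    (u v : R[M]) : d (u * v) = d u * v + u * d v := by
  have : (LinearMap.mul R R[M]).compr₂ d
      = (LinearMap.mul R R[M]).comp d + (LinearMap.mul R R[M]).compl₂ d := by
    ext x y : 4
    simpa using h x y
  exact LinearMap.congr_fun₂ this u v

variable {R G : Type*} [CommSemiring R] [Group G]

noncomputable def conjMap (F : R[G]) : R[G] →ₗ[R] R[G] :=
  Finsupp.linearCombination R (fun a => of R G a * F * of R G a⁻¹) ∘ₗ
    (coeffLinearEquiv R).toLinearMap

theorem conjMap_apply (F u : R[G]) :
    conjMap F u = u.coeff.sum fun a r => r • (of R G a * F * of R G a⁻¹) :=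
  Finsupp.linearCombination_apply R u.coeff

theorem conjMap_of (F : R[G]) (a : G) : conjMap F (of R G a) = of R G a * F * of R G a⁻¹ := by
  simp [conjMap]

theorem conjMap_of_mul (F : R[G]) (x : G) (u : R[G]) :
    conjMap F (of R G x * u) = of R G x * conjMap F u * of R G x⁻¹ := by
  have : conjMap F ∘ₗ LinearMap.mulLeft R (of R G x)
      = LinearMap.mulRight R (of R G x⁻¹) ∘ₗ LinearMap.mulLeft R (of R G x) ∘ₗ conjMap F := by
    ext a : 2
    simp only [LinearMap.comp_apply, LinearMap.mulLeft_apply, LinearMap.mulRight_apply,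
      lsingle_apply, ← of_apply, ← map_mul, conjMap_of, mul_inv_rev, mul_assoc]
    rw [map_mul, mul_assoc]
  exact LinearMap.congr_fun this u

end MonoidAlgebra

theorem stmt7 (R : Type*) [CommRing R] (G : Type*) [Group G]
    (D : MonoidAlgebra R G →ₗ[R] MonoidAlgebra R G)
    (hFox : ∀ x y : G,
      D (MonoidAlgebra.of R G x * MonoidAlgebra.of R G y)
        = D (MonoidAlgebra.of R G x) + MonoidAlgebra.of R G x * D (MonoidAlgebra.of R G y))
    (F : MonoidAlgebra R G)
    (d : MonoidAlgebra R G →ₗ[R] MonoidAlgebra R G)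
    (hd : ∀ x : G, d (MonoidAlgebra.of R G x)
        = (D (MonoidAlgebra.of R G x)).coeff.sum
            (fun a r => r • (MonoidAlgebra.of R G a * F * MonoidAlgebra.of R G a⁻¹
              * MonoidAlgebra.of R G x))) :
    ∀ u v : MonoidAlgebra R G, d (u * v) = d u * v + u * d v := by
  have hd_conjMap (x : G) : d (of R G x) = conjMap F (D (of R G x)) * of R G x := by
    rw [hd x, conjMap_apply, Finsupp.sum_mul]
    simp only [smul_mul_assoc]
  refine leibniz_of_leibniz_of d fun x y => ?_
  rw [hd_conjMap, map_mul, hFox, map_add, conjMap_of_mul, hd_conjMap, hd_conjMap]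
  simp only [add_mul, mul_assoc, ← map_mul (of R G), inv_mul_cancel_left]
end

section
/- Let A be an associative unital algebra over a commutative ring R, n ≥ 1, and let A_n be the coordinate algebra of the n-th representation scheme of A. For any derivation d : A → A, there is a unique derivation d̃ : A_n → A_n such that d̃(a_{ij}) = (d(a))_{ij} for all a ∈ A and i, j ∈ {1, …, n}. Moreover d̃(tr(a)) = tr(d(a)) for all a ∈ A, where tr(a) = Σᵢ a_{ii}; hence d̃ preserves the subalgebra A_n^t generated by tr(A). -/
open MvPolynomial
set_option synthInstance.maxHeartbeats 1000000
set_option maxHeartbeats 1000000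

/-- The defining relations of the coordinate algebra of the `n`-th representation scheme. -/
def RelSet (R : Type*) [CommRing R] (A : Type*) [Ring A] [Algebra R A] (n : ℕ) :
    Set (MvPolynomial (A × Fin n × Fin n) R) :=
  {p | (∃ i j : Fin n, p = X ((1 : A), i, j) - C (if i = j then 1 else 0))
    ∨ (∃ (r : R) (a : A) (i j : Fin n), p = X (r • a, i, j) - C r * X (a, i, j))
    ∨ (∃ (a b : A) (i j : Fin n), p = X (a + b, i, j) - X (a, i, j) - X (b, i, j))
    ∨ (∃ (a b : A) (i j : Fin n),
        p = X (a * b, i, j) - ∑ l, X (a, i, l) * X (b, l, j))}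

/-- The coordinate algebra `A_n` of the `n`-th representation scheme of `A`. -/
abbrev An (R : Type*) [CommRing R] (A : Type*) [Ring A] [Algebra R A] (n : ℕ) :=
  MvPolynomial (A × Fin n × Fin n) R ⧸ Ideal.span (RelSet R A n)

/-- The generator `a_{ij}` of `A_n`. -/
noncomputable def ent (R : Type*) [CommRing R] (A : Type*) [Ring A] [Algebra R A] (n : ℕ)
    (a : A) (i j : Fin n) : An R A n :=
  Ideal.Quotient.mk (Ideal.span (RelSet R A n)) (X (a, i, j))

section Aux

variable {R : Type*} [CommRing R] {A : Type*} [Ring A] [Algebra R A] {n : ℕ}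

private lemma mk_rel {p : MvPolynomial (A × Fin n × Fin n) R} (hp : p ∈ RelSet R A n) :
    Ideal.Quotient.mk (Ideal.span (RelSet R A n)) p = 0 :=
  Ideal.Quotient.eq_zero_iff_mem.2 (Ideal.subset_span hp)

private lemma ent_smul (r : R) (a : A) (i j : Fin n) :
    ent R A n (r • a) i j = r • ent R A n a i j := by
  have h := mk_rel (R := R) (Or.inr (Or.inl ⟨r, a, i, j, rfl⟩))
  rw [map_sub, sub_eq_zero] at h
  rw [ent, h, map_mul, ← MvPolynomial.algebraMap_eq, ← Ideal.Quotient.algebraMap_eq,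
    ← IsScalarTower.algebraMap_apply, ← Algebra.smul_def]
  rfl

private lemma ent_add (a b : A) (i j : Fin n) :
    ent R A n (a + b) i j = ent R A n a i j + ent R A n b i j := by
  have h := mk_rel (R := R) (Or.inr (Or.inr (Or.inl ⟨a, b, i, j, rfl⟩)))
  rw [map_sub, map_sub, sub_sub, sub_eq_zero] at h
  simpa [ent] using h

private lemma ent_mul (a b : A) (i j : Fin n) :
    ent R A n (a * b) i j = ∑ l, ent R A n a i l * ent R A n b l j := by
  have h := mk_rel (R := R) (Or.inr (Or.inr (Or.inr ⟨a, b, i, j, rfl⟩)))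
  rw [map_sub, sub_eq_zero] at h
  simpa [ent] using h

private lemma ent_zero (i j : Fin n) : ent R A n (0 : A) i j = 0 := by
  have := ent_smul (R := R) (A := A) (n := n) 0 0 i j
  simpa using this

private lemma An_smul_def (q : MvPolynomial (A × Fin n × Fin n) R) (x : An R A n) :
    q • x = Ideal.Quotient.mk (Ideal.span (RelSet R A n)) q * x := by
  rw [← Ideal.Quotient.algebraMap_eq]; exact Algebra.smul_def q x

private lemma mk_C' (r : R) :
    Ideal.Quotient.mk (Ideal.span (RelSet R A n)) (C r) = algebraMap R (An R A n) r := by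
  rw [← MvPolynomial.algebraMap_eq, ← Ideal.Quotient.algebraMap_eq,
    ← IsScalarTower.algebraMap_apply]

variable (d : A →ₗ[R] A)

/-- The lift of `d` to a derivation from the polynomial ring into `A_n`. -/
noncomputable def Dpoly : Derivation R (MvPolynomial (A × Fin n × Fin n) R) (An R A n) :=
  mkDerivation R (fun v => ent R A n (d v.1) v.2.1 v.2.2)

private lemma Dpoly_X (a : A) (i j : Fin n) :
    Dpoly d (X (a, i, j)) = ent R A n (d a) i j :=
  mkDerivation_X _ _ _

private lemma Dpoly_rel (hd : ∀ x y : A, d (x * y) = d x * y + x * d y)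
    {p : MvPolynomial (A × Fin n × Fin n) R} (hp : p ∈ RelSet R A n) :
    Dpoly d p = 0 := by
  have hd1 : d 1 = 0 := by
    have h := hd 1 1
    simp only [mul_one, one_mul] at h
    exact (left_eq_add.mp h)
  obtain ⟨i, j, rfl⟩ | ⟨r, a, i, j, rfl⟩ | ⟨a, b, i, j, rfl⟩ | ⟨a, b, i, j, rfl⟩ := hp
  · rw [Derivation.map_sub, derivation_C, Dpoly_X, hd1, ent_zero, sub_zero]
  · rw [Derivation.map_sub, Derivation.leibniz, derivation_C, Dpoly_X, Dpoly_X, smul_zero,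
      add_zero, An_smul_def, map_smul, ent_smul, mk_C', ← Algebra.smul_def, sub_self]
  · rw [Derivation.map_sub, Derivation.map_sub, Dpoly_X, Dpoly_X, Dpoly_X, map_add, ent_add]
    ring
  · rw [Derivation.map_sub, map_sum, Dpoly_X, hd a b, ent_add, ent_mul, ent_mul]
    have : ∀ l : Fin n, Dpoly d (X (a, i, l) * X (b, l, j)) =
        ent R A n a i l * ent R A n (d b) l j + ent R A n b l j * ent R A n (d a) i l := by
      intro l
      rw [Derivation.leibniz, Dpoly_X, Dpoly_X, An_smul_def, An_smul_def]
      rfl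
    have hsum : (∑ l, Dpoly d (X (a, i, l) * X (b, l, j))) =
        ∑ l, (ent R A n a i l * ent R A n (d b) l j + ent R A n b l j * ent R A n (d a) i l) :=
      Finset.sum_congr rfl fun l _ => this l
    rw [hsum, Finset.sum_add_distrib]
    have h2 : (∑ l, ent R A n b l j * ent R A n (d a) i l) =
        ∑ l, ent R A n (d a) i l * ent R A n b l j :=
      Finset.sum_congr rfl fun l _ => mul_comm _ _
    rw [h2]; ring

private lemma Dpoly_vanish (hd : ∀ x y : A, d (x * y) = d x * y + x * d y)
    {p : MvPolynomial (A × Fin n × Fin n) R} (hp : p ∈ Ideal.span (RelSet R A n)) :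
    Dpoly d p = 0 := by
  refine Submodule.span_induction (p := fun x _ => Dpoly d x = 0)
    (fun x hx => Dpoly_rel d hd hx) (map_zero _) ?_ ?_ hp
  · intro x y _ _ hx hy
    show Dpoly d (x + y) = 0
    rw [map_add, hx, hy, add_zero]
  · intro c x hxmem hx
    show Dpoly d (c • x) = 0
    have h0 : Ideal.Quotient.mk (Ideal.span (RelSet R A n)) x = 0 :=
      Ideal.Quotient.eq_zero_iff_mem.2 hxmem
    rw [smul_eq_mul, Derivation.leibniz, hx, smul_zero, zero_add, An_smul_def, h0, zero_mul]

noncomputable def dtilde (d : A →ₗ[R] A) (hd : ∀ x y : A, d (x * y) = d x * y + x * d y) :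
    An R A n →ₗ[R] An R A n :=
  Submodule.liftQ ((Ideal.span (RelSet R A n)).restrictScalars R) (Dpoly d).toLinearMap
    (fun p hp => Dpoly_vanish d hd hp)

private lemma ent_def (a : A) (i j : Fin n) :
    ent R A n a i j = Ideal.Quotient.mk (Ideal.span (RelSet R A n)) (X (a, i, j)) := rfl

private lemma dtilde_mk (d : A →ₗ[R] A) (hd : ∀ x y : A, d (x * y) = d x * y + x * d y)
    (p : MvPolynomial (A × Fin n × Fin n) R) :
    dtilde d hd (Ideal.Quotient.mk (Ideal.span (RelSet R A n)) p) = Dpoly d p :=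
  Submodule.liftQ_apply _ _ p

private lemma dtilde_leibniz (d : A →ₗ[R] A) (hd : ∀ x y : A, d (x * y) = d x * y + x * d y)
    (u v : An R A n) : dtilde d hd (u * v) = dtilde d hd u * v + u * dtilde d hd v := by
  obtain ⟨p, rfl⟩ := Ideal.Quotient.mk_surjective u
  obtain ⟨q, rfl⟩ := Ideal.Quotient.mk_surjective v
  rw [← map_mul, dtilde_mk, dtilde_mk, dtilde_mk, Derivation.leibniz, An_smul_def, An_smul_def]
  ring

private lemma dtilde_ent (d : A →ₗ[R] A) (hd : ∀ x y : A, d (x * y) = d x * y + x * d y)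
    (a : A) (i j : Fin n) : dtilde d hd (ent R A n a i j) = ent R A n (d a) i j := by
  rw [ent_def, dtilde_mk, Dpoly_X]

end Aux

section Aux2

variable {R : Type*} [CommRing R] {A : Type*} [Ring A] [Algebra R A] {n : ℕ}

private lemma dt_one_eq_zero (dt : An R A n →ₗ[R] An R A n)
    (h : ∀ u v, dt (u * v) = dt u * v + u * dt v) : dt 1 = 0 := by
  have h1 := h 1 1
  simp only [mul_one, one_mul] at h1
  exact (left_eq_add.mp h1)

private lemma dt_algebraMap (dt : An R A n →ₗ[R] An R A n)
    (h : ∀ u v, dt (u * v) = dt u * v + u * dt v) (r : R) :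
    dt (algebraMap R (An R A n) r) = 0 := by
  rw [Algebra.algebraMap_eq_smul_one, map_smul, dt_one_eq_zero dt h, smul_zero]

private lemma dt_unique (d : A →ₗ[R] A) (dt1 dt2 : An R A n →ₗ[R] An R A n)
    (h1 : ∀ u v, dt1 (u * v) = dt1 u * v + u * dt1 v)
    (h2 : ∀ u v, dt2 (u * v) = dt2 u * v + u * dt2 v)
    (he1 : ∀ (a : A) (i j : Fin n), dt1 (ent R A n a i j) = ent R A n (d a) i j)
    (he2 : ∀ (a : A) (i j : Fin n), dt2 (ent R A n a i j) = ent R A n (d a) i j) :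
    dt1 = dt2 := by
  refine LinearMap.ext fun x => ?_
  obtain ⟨p, rfl⟩ := Ideal.Quotient.mk_surjective x
  induction p using MvPolynomial.induction_on with
  | C r => rw [mk_C', dt_algebraMap _ h1, dt_algebraMap _ h2]
  | add p q hp hq => simp only [map_add, hp, hq]
  | mul_X p v hp =>
      obtain ⟨a, i, j⟩ := v
      have hmk : Ideal.Quotient.mk (Ideal.span (RelSet R A n)) (p * X (a, i, j)) =
          Ideal.Quotient.mk (Ideal.span (RelSet R A n)) p * ent R A n a i j := by
        rw [map_mul]; rfl
      rw [hmk, h1, h2, hp, he1, he2]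

end Aux2

theorem stmt10 (R : Type*) [CommRing R] (A : Type*) [Ring A] [Algebra R A]
    (n : ℕ) (hn : 1 ≤ n)
    (d : A →ₗ[R] A) (hd : ∀ x y : A, d (x * y) = d x * y + x * d y) :
    (∃! dt : An R A n →ₗ[R] An R A n,
      (∀ u v : An R A n, dt (u * v) = dt u * v + u * dt v) ∧
      (∀ (a : A) (i j : Fin n), dt (ent R A n a i j) = ent R A n (d a) i j)) ∧
    (∀ dt : An R A n →ₗ[R] An R A n,
      ((∀ u v : An R A n, dt (u * v) = dt u * v + u * dt v) ∧
       (∀ (a : A) (i j : Fin n), dt (ent R A n a i j) = ent R A n (d a) i j)) →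
      (∀ a : A, dt (∑ i, ent R A n a i i) = ∑ i, ent R A n (d a) i i) ∧
      (∀ z ∈ Algebra.adjoin R {z : An R A n | ∃ a : A, z = ∑ i, ent R A n a i i},
        dt z ∈ Algebra.adjoin R {z : An R A n | ∃ a : A, z = ∑ i, ent R A n a i i})) := by
  classical
  constructor
  · exact ⟨dtilde d hd, ⟨dtilde_leibniz d hd, dtilde_ent d hd⟩,
      fun dt' ⟨hl, he⟩ => dt_unique d dt' (dtilde d hd) hl (dtilde_leibniz d hd) he
        (dtilde_ent d hd)⟩
  · rintro dt ⟨hleib, hent⟩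
    constructor
    · intro a
      rw [map_sum]
      exact Finset.sum_congr rfl fun i _ => hent a i i
    · intro z hz
      refine Algebra.adjoin_induction
        (p := fun x _ => dt x ∈ Algebra.adjoin R
          {z : An R A n | ∃ a : A, z = ∑ i, ent R A n a i i}) ?_ ?_ ?_ ?_ hz
      · rintro x ⟨a, rfl⟩
        have hsum : dt (∑ i, ent R A n a i i) = ∑ i, ent R A n (d a) i i := by
          rw [map_sum]; exact Finset.sum_congr rfl fun i _ => hent a i i
        rw [hsum]
        exact Algebra.subset_adjoin ⟨d a, rfl⟩
      · intro r
        rw [dt_algebraMap dt hleib]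
        exact Subalgebra.zero_mem _
      · intro x y _ _ ihx ihy
        rw [map_add]
        exact add_mem ihx ihy
      · intro x y hx hy ihx ihy
        rw [hleib]
        exact add_mem (mul_mem ihx hy) (mul_mem hx ihy)
end
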